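/- Let S = ⟨qm₁,…,qm_d, pn₁,…,pn_k⟩ be a gluing of S₁ and S₂. Then the following are equivalent: (1) S is a nice gluing of S₁ and S₂ (i.e. q = a·n₁ for some 1 < a ≤ ord_{S₁}(p)) and ord_{S₂}(s+n₁) = ord_{S₂}(s)+1 for all s∈S₂ (i.e. G(S₂) is Cohen–Macaulay); (2) ord_{S₂}(q) ≤ ord_{S₁}(p) and ord_{S₂}(y + αq) = ord_{S₂}(y) + α·ord_{S₂}(q) for all y∈S₂ and all integers α ≥ 0. -/

import Mathlib

open scoped Pointwise

/-- `S ⊆ ℕ` is a numerical semigroup: it contains `0`, is closed under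
addition, and has finite complement in `ℕ`. -/
def IsNumSgp (S : Set ℕ) : Prop :=
  (0 : ℕ) ∈ S ∧ (∀ a ∈ S, ∀ b ∈ S, a + b ∈ S) ∧ {x : ℕ | x ∉ S}.Finite

/-- `nM S t` is the `t`-fold sumset of the maximal ideal `M = S \ {0}`,
with the convention `nM S 0 = S`. -/
def nM (S : Set ℕ) : ℕ → Set ℕ
  | 0 => S
  | t + 1 => (S \ {0}) + nM S t

/-- the order of `s` with respect to `S` : the largest `t` with `s ∈ tM`. -/
noncomputable def ordS (S : Set ℕ) (s : ℕ) : ℕ := sSup {t : ℕ | s ∈ nM S t}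

/-- the multiplicity of `S` : its least nonzero element. -/
noncomputable def mult (S : Set ℕ) : ℕ := sInf {x : ℕ | x ∈ S ∧ x ≠ 0}

/-- the Apéry set of `S` with respect to `x` : elements `s ∈ S` with `s - x ∉ S`. -/
def Ap (S : Set ℕ) (x : ℕ) : Set ℕ := {s : ℕ | s ∈ S ∧ ¬ ∃ t ∈ S, s = t + x}

/-- membership of an integer in (the image in `ℤ` of) `S`. -/
def zmem (S : Set ℕ) (z : ℤ) : Prop := ∃ t ∈ S, (t : ℤ) = z

/-- the Frobenius number of `S` : the largest integer not in `S`. -/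
noncomputable def Frob (S : Set ℕ) : ℤ := sSup {z : ℤ | ¬ zmem S z}

/-- `S` is symmetric: for every integer `z`, `z ∈ S` iff `F(S) - z ∉ S`. -/
def IsSymmetric (S : Set ℕ) : Prop := ∀ z : ℤ, zmem S z ↔ ¬ zmem S (Frob S - z)

/-- the set of maximal elements of `Ap S x` with respect to the order
`u ⪯ v` iff `v = u + z` for some `z ∈ S`. -/
def MaxAp (S : Set ℕ) (x : ℕ) : Set ℕ :=
  {w : ℕ | w ∈ Ap S x ∧ ∀ y ∈ Ap S x, (∃ z ∈ S, y = w + z) → y = w}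

/-- the set of maximal elements of `Ap S x` with respect to the order
`u ⪯_M v` iff `v = u + z` for some `z ∈ S` with `ord(v) = ord(u) + ord(z)`. -/
def MaxMAp (S : Set ℕ) (x : ℕ) : Set ℕ :=
  {w : ℕ | w ∈ Ap S x ∧ ∀ y ∈ Ap S x,
    (∃ z ∈ S, y = w + z ∧ ordS S y = ordS S w + ordS S z) → y = w}

/-- `S` is M-pure with respect to `x` : all maximal elements of `Ap S x`
under `⪯_M` have the same order. -/
def MPureWrt (S : Set ℕ) (x : ℕ) : Prop :=
  ∀ w ∈ MaxMAp S x, ∀ w' ∈ MaxMAp S x, ordS S w = ordS S w'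

/-- `S` is M-pure : it is M-pure with respect to its multiplicity. -/
def MPure (S : Set ℕ) : Prop := MPureWrt S (mult S)

/-- `β_i(x)` : the number of elements of `Ap S x` of order `i`. -/
noncomputable def betaS (S : Set ℕ) (x i : ℕ) : ℕ := {w ∈ Ap S x | ordS S w = i}.ncard

/-- `d(x)` : the maximal order of an element of `Ap S x`. -/
noncomputable def dS (S : Set ℕ) (x : ℕ) : ℕ := sSup (ordS S '' Ap S x)

/-- the reduction number of `S` : the least `r` with `(r+1)M = m(S) + rM`. -/
noncomputable def redNum (S : Set ℕ) : ℕ :=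
  sInf {r : ℕ | nM S (r + 1) = (fun y => mult S + y) '' nM S r}

/-- `l_x(S) = max { ord(s+x) - ord(x) - ord(s) : s ∈ S, ord(s) ≤ r }`. -/
noncomputable def lS (S : Set ℕ) (x : ℕ) : ℕ :=
  sSup {t : ℕ | ∃ s ∈ S, ordS S s ≤ redNum S ∧ t = ordS S (s + x) - ordS S x - ordS S s}

/-- the Hilbert function of `S`. -/
noncomputable def HilbS (S : Set ℕ) (t : ℕ) : ℕ := (nM S t \ nM S (t + 1)).ncard

/-- The data of a gluing `S = ⟨q m₁, …, q m_d, p n₁, …, p n_k⟩` of two numerical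
semigroups `S₁ = ⟨m₁, …, m_d⟩` and `S₂ = ⟨n₁, …, n_k⟩`, minimally generated by
`m₁ < ⋯ < m_d` and `n₁ < ⋯ < n_k`, where `p ∈ S₁ \ {m₁, …, m_d}`,
`q ∈ S₂ \ {n₁, …, n_k}` and `gcd(p, q) = 1`. -/
structure Gluing where
  d : ℕ
  k : ℕ
  hd : 0 < d
  hk : 0 < k
  m : Fin d → ℕ
  n : Fin k → ℕ
  p : ℕ
  q : ℕ
  hm : StrictMono m
  hn : StrictMono n
  hmin₁ : ∀ i, m i ∉ AddSubmonoid.closure (Set.range m \ {m i})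
  hmin₂ : ∀ j, n j ∉ AddSubmonoid.closure (Set.range n \ {n j})
  hnum₁ : IsNumSgp (AddSubmonoid.closure (Set.range m) : Set ℕ)
  hnum₂ : IsNumSgp (AddSubmonoid.closure (Set.range n) : Set ℕ)
  hp : p ∈ AddSubmonoid.closure (Set.range m)
  hq : q ∈ AddSubmonoid.closure (Set.range n)
  hpm : p ∉ Set.range m
  hqn : q ∉ Set.range n
  hpq : Nat.gcd p q = 1

/-- the numerical semigroup `S₁ = ⟨m₁, …, m_d⟩`. -/
def Gluing.S₁ (G : Gluing) : Set ℕ := (AddSubmonoid.closure (Set.range G.m) : Set ℕ)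

/-- the numerical semigroup `S₂ = ⟨n₁, …, n_k⟩`. -/
def Gluing.S₂ (G : Gluing) : Set ℕ := (AddSubmonoid.closure (Set.range G.n) : Set ℕ)

/-- the glued numerical semigroup `S = ⟨q m₁, …, q m_d, p n₁, …, p n_k⟩`. -/
def Gluing.S (G : Gluing) : Set ℕ :=
  (AddSubmonoid.closure
    ((fun x => G.q * x) '' Set.range G.m ∪ (fun x => G.p * x) '' Set.range G.n) : Set ℕ)

/-- the smallest generator `m₁` of `S₁`. -/
def Gluing.m₁ (G : Gluing) : ℕ := G.m ⟨0, G.hd⟩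

/-- the smallest generator `n₁` of `S₂`. -/
def Gluing.n₁ (G : Gluing) : ℕ := G.n ⟨0, G.hk⟩

/-- the gluing is specific if `ord_{S₂}(q) + l_q(S₂) ≤ ord_{S₁}(p)`. -/
def Gluing.Specific (G : Gluing) : Prop := ordS G.S₂ G.q + lS G.S₂ G.q ≤ ordS G.S₁ G.p

/-- the gluing is nice if `q = a n₁` for some `1 < a ≤ ord_{S₁}(p)`. -/
def Gluing.Nice (G : Gluing) : Prop := ∃ a : ℕ, 1 < a ∧ a ≤ ordS G.S₁ G.p ∧ G.q = a * G.n₁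

/-!
Cohen–Macaulayness of `G(S₂)` says that adding the multiplicity `n₁` raises the order by exactly
one; iterating, `ord(y + j n₁) = ord(y) + j`, which gives (1) ⇒ (2) with `ord(q) = a`.

Conversely, write `e = ord(q)`, so that `q ≥ e n₁`. If `q > e n₁`, then for large `α` the element
`α q` is `(α e + 1) n₁` plus an element beyond the Frobenius number, so `ord(α q) > α e`,
contradicting additivity; hence `q = e n₁`, and `e > 1` because `q` is not a generator. Finally
`ord(s) + e = ord(s + q) ≥ ord(s + n₁) + (e - 1) ≥ ord(s) + e` squeezes `ord(s + n₁) = ord(s) + 1`.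
-/

section SetSemigroup

variable {S : Set ℕ} {μ : ℕ}

lemma mul_le_of_mem_nM (hμ : ∀ x ∈ S, x ≠ 0 → μ ≤ x) :
    ∀ {t x : ℕ}, x ∈ nM S t → μ * t ≤ x
  | 0, _, _ => by simp
  | t + 1, _, hx => by
    obtain ⟨a, ⟨haS, ha0⟩, b, hb, rfl⟩ := Set.mem_add.mp hx
    have hb' := mul_le_of_mem_nM hμ hb
    have ha' := hμ a haS ha0
    rw [mul_add_one]
    omega

lemma bddAbove_setOf_mem_nM (s : ℕ) : BddAbove {t : ℕ | s ∈ nM S t} :=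
  ⟨s, fun t ht => by
    simpa using mul_le_of_mem_nM (fun x _ hx => Nat.one_le_iff_ne_zero.mpr hx) ht⟩

lemma mem_nM_ordS {s : ℕ} (hs : s ∈ S) : s ∈ nM S (ordS S s) :=
  Nat.sSup_mem ⟨0, hs⟩ (bddAbove_setOf_mem_nM s)

lemma le_ordS {s t : ℕ} (h : s ∈ nM S t) : t ≤ ordS S s :=
  le_csSup (bddAbove_setOf_mem_nM s) h

lemma ordS_zero (h0 : 0 ∈ S) : ordS S 0 = 0 := by
  simpa using mul_le_of_mem_nM (fun x _ hx => Nat.one_le_iff_ne_zero.mpr hx) (mem_nM_ordS h0)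

lemma mul_add_mem_nM (hμ : μ ∈ S) (hμ0 : μ ≠ 0) {y t : ℕ} (hy : y ∈ nM S t) :
    ∀ j : ℕ, j * μ + y ∈ nM S (j + t)
  | 0 => by simpa using hy
  | j + 1 => by
    rw [show (j + 1) * μ + y = μ + (j * μ + y) by ring, show j + 1 + t = j + t + 1 by ring]
    exact Set.add_mem_add ⟨hμ, hμ0⟩ (mul_add_mem_nM hμ hμ0 hy j)

lemma ordS_add_le_ordS_add_mul (hμ : μ ∈ S) (hμ0 : μ ≠ 0) {s : ℕ} (hs : s ∈ S) (j : ℕ) :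
    ordS S s + j ≤ ordS S (s + j * μ) := by
  rw [add_comm s, add_comm (ordS S s)]
  exact le_ordS (mul_add_mem_nM hμ hμ0 (mem_nM_ordS hs) j)

end SetSemigroup

section Submonoid

variable {S : AddSubmonoid ℕ} {μ : ℕ}

lemma ordS_add_mul_of_ordS_add_eq_succ (hμ : μ ∈ S)
    (hCM : ∀ s ∈ S, ordS S (s + μ) = ordS S s + 1) {y : ℕ} (hy : y ∈ S) :
    ∀ j : ℕ, ordS S (y + j * μ) = ordS S y + j
  | 0 => by simp
  | j + 1 => by
    have hmem : y + j * μ ∈ S := S.add_mem hy (by simpa using S.nsmul_mem hμ j)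
    rw [show y + (j + 1) * μ = y + j * μ + μ by ring, hCM _ hmem,
      ordS_add_mul_of_ordS_add_eq_succ hμ hCM hy j, add_assoc]

lemma ordS_add_eq_succ_of_ordS_add_mul (hμ : μ ∈ S) (hμ0 : μ ≠ 0) {e : ℕ} (he : 0 < e)
    (h : ∀ s ∈ S, ordS S (s + e * μ) = ordS S s + e) :
    ∀ s ∈ S, ordS S (s + μ) = ordS S s + 1 := by
  intro s hs
  obtain ⟨k, rfl⟩ : ∃ k, e = k + 1 := Nat.exists_eq_succ_of_ne_zero he.ne'
  have hlow := ordS_add_le_ordS_add_mul hμ hμ0 hs 1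
  have hhigh := ordS_add_le_ordS_add_mul hμ hμ0 (S.add_mem hs hμ) k
  rw [show s + μ + k * μ = s + (k + 1) * μ by ring, h s hs] at hhigh
  rw [one_mul] at hlow
  omega

lemma eq_ordS_mul_of_ordS_mul_eq (hfin : {x : ℕ | x ∉ S}.Finite) (hμ : μ ∈ S) (hμ0 : μ ≠ 0)
    (hmin : ∀ x ∈ S, x ≠ 0 → μ ≤ x) {q : ℕ} (hq : q ∈ S)
    (h : ∀ α : ℕ, ordS S (α * q) = α * ordS S q) : q = ordS S q * μ := by
  set e := ordS S q
  have hle : μ * e ≤ q := mul_le_of_mem_nM hmin (mem_nM_ordS hq)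
  by_contra hne
  have hlt : e * μ + 1 ≤ q := by rw [mul_comm] at hle; omega
  obtain ⟨B, hB⟩ := hfin.bddAbove
  -- chosen so that `α q` exceeds `(α e + 1) μ` by more than the bound `B` on the gaps
  set α := B + 1 + μ
  have hαq : (α * e + 1) * μ + (B + 1) ≤ α * q :=
    calc (α * e + 1) * μ + (B + 1) = α * (e * μ + 1) := by ring
      _ ≤ α * q := Nat.mul_le_mul_left α hlt
  have hrest : α * q - (α * e + 1) * μ ∈ S := by
    by_contra hnot
    have := hB hnot
    omega
  have hmem : α * q ∈ nM S (α * e + 1) := by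
    simpa [Nat.add_sub_cancel' (le_of_add_le_left hαq)] using
      mul_add_mem_nM hμ hμ0 (t := 0) hrest (α * e + 1)
  have := le_ordS hmem
  rw [h α] at this
  omega

end Submonoid

lemma le_of_mem_closure_range_of_ne_zero {d : ℕ} (hd : 0 < d) {m : Fin d → ℕ}
    (hm : Monotone m) {x : ℕ} (hx : x ∈ AddSubmonoid.closure (Set.range m)) (hx0 : x ≠ 0) :
    m ⟨0, hd⟩ ≤ x := by
  induction hx using AddSubmonoid.closure_induction with
  | mem y hy =>
    obtain ⟨j, rfl⟩ := hy
    exact hm (Fin.le_def.mpr (Nat.zero_le _))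
  | zero => exact absurd rfl hx0
  | add a b _ _ iha ihb =>
    rcases Nat.eq_zero_or_pos a with rfl | ha
    · simpa using ihb (by simpa using hx0)
    · exact (iha ha.ne').trans (Nat.le_add_right a b)

namespace Gluing

variable (G : Gluing)

lemma n₁_mem : G.n₁ ∈ G.S₂ :=
  AddSubmonoid.subset_closure ⟨⟨0, G.hk⟩, rfl⟩

lemma n₁_ne_zero : G.n₁ ≠ 0 := fun h =>
  G.hmin₂ ⟨0, G.hk⟩ (by rw [show G.n ⟨0, G.hk⟩ = 0 from h]; exact zero_mem _)

lemma n₁_le_of_mem : ∀ x ∈ G.S₂, x ≠ 0 → G.n₁ ≤ x :=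
  fun _ hx hx0 => le_of_mem_closure_range_of_ne_zero G.hk G.hn.monotone hx hx0

/-- If `q = 0` then `p = gcd(p, q) = 1`, which would be the generator `m₁`. -/
lemma q_ne_zero : G.q ≠ 0 := by
  intro hq
  have hp : G.p = 1 := by simpa [hq] using G.hpq
  have hm₁ : G.m ⟨0, G.hd⟩ ≠ 0 := fun h =>
    G.hmin₁ ⟨0, G.hd⟩ (by rw [h]; exact zero_mem _)
  have := le_of_mem_closure_range_of_ne_zero G.hd G.hm.monotone G.hp (by omega)
  exact G.hpm ⟨⟨0, G.hd⟩, by omega⟩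

lemma one_lt_of_q_eq_mul {a : ℕ} (h : G.q = a * G.n₁) : 1 < a := by
  rcases Nat.lt_trichotomy a 1 with ha | rfl | ha
  · exact absurd (by simpa [Nat.lt_one_iff.mp ha] using h) G.q_ne_zero
  · exact absurd ⟨⟨0, G.hk⟩, by rw [h, one_mul]; rfl⟩ G.hqn
  · exact ha

end Gluing

/-- for a gluing `S` of `S₁` and `S₂`, the following are equivalent:
(1) `S` is a nice gluing and `G(S₂)` is Cohen–Macaulay
    (i.e. `ord_{S₂}(s + n₁) = ord_{S₂}(s) + 1` for all `s ∈ S₂`);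
(2) `ord_{S₂}(q) ≤ ord_{S₁}(p)` and
    `ord_{S₂}(y + αq) = ord_{S₂}(y) + α·ord_{S₂}(q)` for all `y ∈ S₂`, `α ≥ 0`. -/
theorem stmt7 (G : Gluing) :
    (G.Nice ∧ ∀ s ∈ G.S₂, ordS G.S₂ (s + G.n₁) = ordS G.S₂ s + 1) ↔
      (ordS G.S₂ G.q ≤ ordS G.S₁ G.p ∧
        ∀ y ∈ G.S₂, ∀ α : ℕ,
          ordS G.S₂ (y + α * G.q) = ordS G.S₂ y + α * ordS G.S₂ G.q) := by
  have h0 : (0 : ℕ) ∈ G.S₂ := zero_mem _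
  constructor
  · rintro ⟨⟨a, -, hap, hq⟩, hCM⟩
    have hiter : ∀ y ∈ G.S₂, ∀ j : ℕ, ordS G.S₂ (y + j * G.n₁) = ordS G.S₂ y + j :=
      fun y hy => ordS_add_mul_of_ordS_add_eq_succ G.n₁_mem hCM hy
    have hord : ordS G.S₂ G.q = a := by simpa [hq, ordS_zero h0] using hiter 0 h0 a
    refine ⟨hord ▸ hap, fun y hy α => ?_⟩
    rw [hord, hq, ← mul_assoc, hiter y hy]
  · rintro ⟨hle, hadd⟩
    set e := ordS G.S₂ G.q
    have hmul : ∀ α : ℕ, ordS G.S₂ (α * G.q) = α * e := by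
      simpa [ordS_zero h0] using hadd 0 h0
    have hq : G.q = e * G.n₁ :=
      eq_ordS_mul_of_ordS_mul_eq G.hnum₂.2.2 G.n₁_mem G.n₁_ne_zero G.n₁_le_of_mem
        G.hq hmul
    have he : 1 < e := G.one_lt_of_q_eq_mul hq
    have hstep : ∀ s ∈ G.S₂, ordS G.S₂ (s + e * G.n₁) = ordS G.S₂ s + e := by
      simpa [← hq] using fun s hs => hadd s hs 1
    exact ⟨⟨e, he, hle, hq⟩,
      ordS_add_eq_succ_of_ordS_add_mul G.n₁_mem G.n₁_ne_zero (zero_lt_one.trans he) hstep⟩
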